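/- arXiv:2102.01054 — 2 statements merged into one kernel-verified Lean document; each statement's English description precedes it below -/
import Mathlib

section
/- For a partition μ ⊆ n×n that is the complement of a rectangle ρ in the n×n square, and a partition λ_i that is the complement (right-justified in the bottom-right corner) of a single hook ν_i ⊆ n×n, the maximum number of boxes of the skew shape μ \ λ_i lying on a single diagonal of slope -1 equals 1 if ν_i ⊄ ρ and 0 if ν_i ⊆ ρ. -/
/-- `maxdiag S`: the maximal number of boxes of `S` on a single diagonal of slope `-1`
(boxes `(r,c)` with `r - c` constant). -/
def maxdiag (S : Finset (ℕ × ℕ)) : ℕ :=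
  S.sup fun p => (S.filter fun q => q.1 + p.2 = q.2 + p.1).card

/-- The boxes of the Young diagram of `f` inside the `n×n` square
(box `(r,c)` with rows/columns indexed from 1). -/
def boxesOf (n : ℕ) (f : ℕ → ℕ) : Finset (ℕ × ℕ) :=
  (Finset.Icc 1 n ×ˢ Finset.Icc 1 n).filter fun p => p.2 ≤ f p.1

/-- The hook partition `(a, 1^b)` as a function giving row lengths. -/
def hookFun (a b : ℕ) : ℕ → ℕ := fun s => if s = 1 then a else if s ≤ b + 1 then 1 else 0

/-- The complement of a shape, right-justified in the bottom-right corner of `n×n`. -/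
def complOf (n : ℕ) (f : ℕ → ℕ) : ℕ → ℕ := fun r => n - f (n + 1 - r)

/-!
Complementing a hook in the corner of the square removes at most the last row and the last
column, so `μ \ λ` lies on the outer rim of the square, which meets every diagonal at most once.
Hence `maxdiag (μ \ λ)` is `0` or `1` according to whether `μ \ λ` is empty, and it is empty
exactly when the hook fits into the rectangle.
-/

theorem eq_of_diag_of_rim {n : ℕ} {p q : ℕ × ℕ} (hp : p.1 ≤ n ∧ p.2 ≤ n ∧ (p.1 = n ∨ p.2 = n))
    (hq : q.1 ≤ n ∧ q.2 ≤ n ∧ (q.1 = n ∨ q.2 = n)) (hdiag : q.1 + p.2 = q.2 + p.1) : q = p := by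
  ext <;> omega

theorem maxdiag_eq_one {S : Finset (ℕ × ℕ)} (hS : S.Nonempty)
    (hdiag : ∀ p ∈ S, ∀ q ∈ S, q.1 + p.2 = q.2 + p.1 → q = p) : maxdiag S = 1 := by
  have hfilter : ∀ p ∈ S, (S.filter fun q => q.1 + p.2 = q.2 + p.1) = {p} := fun p hp => by
    ext q
    simp only [Finset.mem_filter, Finset.mem_singleton]
    exact ⟨fun ⟨hq, hd⟩ => hdiag p hp q hq hd, by rintro rfl; exact ⟨hp, add_comm _ _⟩⟩
  calc maxdiag S = S.sup fun _ => 1 :=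
        Finset.sup_congr rfl fun p hp => by rw [hfilter p hp, Finset.card_singleton]
    _ = 1 := Finset.sup_const hS 1

theorem maxdiag_of_subset_rim {n : ℕ} {S : Finset (ℕ × ℕ)}
    (hS : ∀ p ∈ S, p.1 ≤ n ∧ p.2 ≤ n ∧ (p.1 = n ∨ p.2 = n)) :
    maxdiag S = if S = ∅ then 0 else 1 := by
  split_ifs with h
  · subst h; rfl
  · exact maxdiag_eq_one (Finset.nonempty_iff_ne_empty.2 h)
      fun p hp q hq => eq_of_diag_of_rim (hS p hp) (hS q hq)

theorem mem_boxesOf_sdiff {n : ℕ} {f g : ℕ → ℕ} {p : ℕ × ℕ} :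
    p ∈ boxesOf n f \ boxesOf n g ↔
      1 ≤ p.1 ∧ p.1 ≤ n ∧ 1 ≤ p.2 ∧ p.2 ≤ n ∧ g p.1 < p.2 ∧ p.2 ≤ f p.1 := by
  simp only [boxesOf, Finset.mem_sdiff, Finset.mem_filter, Finset.mem_product, Finset.mem_Icc]
  omega

theorem complOf_hookFun_apply {n a b r : ℕ} (hr : r ≤ n) :
    complOf n (hookFun a b) r = if r = n then n - a else if n - b ≤ r then n - 1 else n := by
  simp only [complOf, hookFun]
  split_ifs <;> omega

theorem stmt_8_general (n a b i j : ℕ) (ha : 1 ≤ a) (han : a ≤ n) (hb : b + 1 ≤ n) :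
    maxdiag (boxesOf n (fun r => if r ≤ n - i then n else n - j) \
        boxesOf n (complOf n (hookFun a b))) =
      if a ≤ j ∧ b + 1 ≤ i then 0 else 1 := by
  set S := boxesOf n (fun r => if r ≤ n - i then n else n - j) \
    boxesOf n (complOf n (hookFun a b))
  have hmem : ∀ p : ℕ × ℕ, p ∈ S ↔ 1 ≤ p.1 ∧ p.1 ≤ n ∧ 1 ≤ p.2 ∧ p.2 ≤ n ∧
      (if p.1 = n then n - a else if n - b ≤ p.1 then n - 1 else n) < p.2 ∧
      p.2 ≤ (if p.1 ≤ n - i then n else n - j) := fun p => by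
    rw [mem_boxesOf_sdiff]
    exact ⟨fun h => complOf_hookFun_apply h.2.1 ▸ h,
      fun h => (complOf_hookFun_apply h.2.1).symm ▸ h⟩
  have hrim : ∀ p ∈ S, p.1 ≤ n ∧ p.2 ≤ n ∧ (p.1 = n ∨ p.2 = n) := fun p hp => by
    rw [hmem] at hp
    split_ifs at hp <;> omega
  have hempty : S = ∅ ↔ a ≤ j ∧ b + 1 ≤ i := by
    rw [Finset.eq_empty_iff_forall_notMem]
    constructor
    · intro h
      by_contra hfit
      by_cases hja : j < a
      · exact h (n, n - a + 1) ((hmem _).2 (by split_ifs <;> omega))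
      · exact h (n - i, n) ((hmem _).2 (by split_ifs <;> omega))
    · intro hfit p hp
      rw [hmem] at hp
      split_ifs at hp <;> omega
  rw [maxdiag_of_subset_rim hrim]
  exact if_congr hempty rfl rfl

/-- For `μ` the complement of an `i×j` rectangle in `n×n` and `λ'` the complement
(right-justified in the bottom-right corner) of a hook `ν = (a,1^b) ⊆ n×n`,
`maxdiag(μ \ λ') = 1` if `ν ⊄ ρ` and `= 0` if `ν ⊆ ρ`. -/
theorem stmt_8 (n a b i j : ℕ) (ha : 1 ≤ a) (han : a ≤ n) (hb : b + 1 ≤ n)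
    (hi : i ≤ n) (hj : j ≤ n) :
    maxdiag (boxesOf n (fun r => if r ≤ n - i then n else n - j) \
        boxesOf n (complOf n (hookFun a b))) =
      if a ≤ j ∧ b + 1 ≤ i then 0 else 1 :=
  stmt_8_general n a b i j ha han hb
end

section
/- Let λ ⊆ n×n be a partition with at least as many boxes above the main diagonal as below, with complement having hook decomposition ν_1 + ... + ν_k, and let λ_i be the complement of ν_i right-justified in the bottom-right corner of the n×n square. Then for every partition μ that is the complement of a rectangle in n×n, maxdiag(μ \ λ) = Σ_{i=1}^k maxdiag(μ \ λ_i). -/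
/-- `conjc n lam s` is the `s`-th part of the conjugate of the complement of `lam`. -/
def conjc (n : ℕ) (lam : ℕ → ℕ) (s : ℕ) : ℕ :=
  ((Finset.Icc 1 n).filter (fun t => s ≤ complOf n lam t)).card

/-
For a partition `g` in the `n × n` square and `μ` the complement of the `i × j` rectangle, every
diagonal of `μ \ g` can be pushed, box by box, right along rows or down columns onto one of the two
diagonals through the corners of the removed rectangle, so `maxdiag (μ \ g)` is the larger of those
two lengths. Read off the complement `gᶜ`, they are the sizes of the initial segments
`{s | s + j ≤ gᶜ s}` and `{s | s + i ≤ (gᶜ)' s}`, so `maxdiag (μ \ g)` is the size of their union.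
For a single hook `(a, 1^b)` this union is `{1}` when `j < a ∨ i ≤ b` and empty otherwise, and for
the diagonal hook `ν_s` of `λᶜ` that condition says exactly that `s` lies in the union for `λ`.
-/

open Finset

section InitialSegments

variable {n : ℕ} {P Q : ℕ → Prop} [DecidablePred P] [DecidablePred Q]

lemma filter_Icc_eq_Icc_card (hP : ∀ a b, 1 ≤ a → a ≤ b → b ≤ n → P b → P a) :
    (Icc 1 n).filter P = Icc 1 #((Icc 1 n).filter P) := by
  set F := (Icc 1 n).filter P
  rcases F.eq_empty_or_nonempty with hF | hF
  · simp [hF]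
  have hmax := mem_filter.1 (F.max'_mem hF)
  have hF_eq : F = Icc 1 (F.max' hF) := by
    ext t
    constructor
    · intro ht
      exact mem_Icc.2 ⟨(mem_Icc.1 (mem_filter.1 ht).1).1, F.le_max' t ht⟩
    · intro ht
      obtain ⟨ht1, ht2⟩ := mem_Icc.1 ht
      have hmax_le := (mem_Icc.1 hmax.1).2
      exact mem_filter.2 ⟨mem_Icc.2 ⟨ht1, ht2.trans hmax_le⟩, hP t _ ht1 ht2 hmax_le hmax.2⟩
  have hcard : #F = F.max' hF := by
    conv_lhs => rw [hF_eq]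
    simp
  rw [hcard]
  exact hF_eq

lemma le_card_filter_Icc_iff (hP : ∀ a b, 1 ≤ a → a ≤ b → b ≤ n → P b → P a) {m : ℕ}
    (hm : 1 ≤ m) :
    m ≤ #((Icc 1 n).filter P) ↔ m ≤ n ∧ P m := by
  calc m ≤ #((Icc 1 n).filter P) ↔ m ∈ Icc 1 #((Icc 1 n).filter P) := by simp [hm]
    _ ↔ m ∈ (Icc 1 n).filter P := by rw [← filter_Icc_eq_Icc_card hP]
    _ ↔ m ≤ n ∧ P m := by simp [hm]

lemma card_filter_Icc_or (hP : ∀ a b, 1 ≤ a → a ≤ b → b ≤ n → P b → P a)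
    (hQ : ∀ a b, 1 ≤ a → a ≤ b → b ≤ n → Q b → Q a) :
    #((Icc 1 n).filter fun s => P s ∨ Q s) =
      max #((Icc 1 n).filter P) #((Icc 1 n).filter Q) := by
  have hPQ : ∀ a b, 1 ≤ a → a ≤ b → b ≤ n → P b ∨ Q b → P a ∨ Q a :=
    fun a b ha hab hbn => Or.imp (hP a b ha hab hbn) (hQ a b ha hab hbn)
  refine eq_of_forall_le_iff fun m => ?_
  rcases Nat.eq_zero_or_pos m with rfl | hm
  · simp
  rw [le_max_iff, le_card_filter_Icc_iff hPQ hm, le_card_filter_Icc_iff hP hm,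
    le_card_filter_Icc_iff hQ hm, and_or_left]

end InitialSegments

section Diagonals

variable {S T : Finset (ℕ × ℕ)}

lemma card_le_maxdiag (hT : T ⊆ S) (hdiag : ∀ q ∈ T, ∀ q' ∈ T, q.1 + q'.2 = q.2 + q'.1) :
    #T ≤ maxdiag S := by
  rcases T.eq_empty_or_nonempty with rfl | ⟨p, hp⟩
  · simp
  calc #T ≤ #(S.filter fun q => q.1 + p.2 = q.2 + p.1) :=
        card_le_card fun q hq => mem_filter.2 ⟨hT hq, hdiag q hq p hp⟩
    _ ≤ maxdiag S := le_sup (f := fun p => #(S.filter fun q => q.1 + p.2 = q.2 + p.1)) (hT hp)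

lemma card_diag_le_of_rowwise {p : ℕ × ℕ} (φ : ℕ → ℕ)
    (h : ∀ q ∈ S, q.1 + p.2 = q.2 + p.1 → (q.1, φ q.1) ∈ T) :
    #(S.filter fun q => q.1 + p.2 = q.2 + p.1) ≤ #T := by
  refine card_le_card_of_injOn (fun q => (q.1, φ q.1)) (fun q hq => ?_) fun q hq q' hq' he => ?_
  · exact h q (mem_filter.1 hq).1 (mem_filter.1 hq).2
  · have hd := (mem_filter.1 hq).2
    have hd' := (mem_filter.1 hq').2
    simp only [Prod.mk.injEq] at he
    ext <;> omega

lemma card_diag_le_of_colwise {p : ℕ × ℕ} (ψ : ℕ → ℕ)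
    (h : ∀ q ∈ S, q.1 + p.2 = q.2 + p.1 → (ψ q.2, q.2) ∈ T) :
    #(S.filter fun q => q.1 + p.2 = q.2 + p.1) ≤ #T := by
  refine card_le_card_of_injOn (fun q => (ψ q.2, q.2)) (fun q hq => ?_) fun q hq q' hq' he => ?_
  · exact h q (mem_filter.1 hq).1 (mem_filter.1 hq).2
  · have hd := (mem_filter.1 hq).2
    have hd' := (mem_filter.1 hq').2
    simp only [Prod.mk.injEq] at he
    ext <;> omega

end Diagonals

lemma complOf_le_complOf {n : ℕ} {g : ℕ → ℕ}
    (hg : ∀ a b, 1 ≤ a → a ≤ b → b ≤ n → g b ≤ g a) {a b : ℕ} (ha : 1 ≤ a) (hab : a ≤ b)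
    (hbn : b ≤ n) : complOf n g b ≤ complOf n g a := by
  have := hg (n + 1 - b) (n + 1 - a) (by omega) (by omega) (by omega)
  simp only [complOf]
  omega

lemma complOf_complOf {n : ℕ} {g : ℕ → ℕ} (hg : ∀ r, g r ≤ n) {t : ℕ} (ht : t ≤ n + 1) :
    complOf n (complOf n g) t = g t := by
  have := hg t
  simp only [complOf, Nat.sub_sub_self ht]
  omega

/-- Row lengths of the complement of the `i × j` rectangle in the bottom-right corner of `n × n`. -/
abbrev coRect (n i j : ℕ) : ℕ → ℕ := fun r => if r ≤ n - i then n else n - j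

section CoRectangle

variable {n i j : ℕ} {g : ℕ → ℕ}

lemma mem_boxesOf_coRect_sdiff {q : ℕ × ℕ} :
    q ∈ boxesOf n (coRect n i j) \ boxesOf n g ↔
      1 ≤ q.1 ∧ q.1 ≤ n ∧ 1 ≤ q.2 ∧ q.2 ≤ n ∧ (q.1 + i ≤ n ∨ q.2 + j ≤ n) ∧ g q.1 < q.2 := by
  simp only [boxesOf, mem_sdiff, mem_filter, mem_product, mem_Icc]
  unfold coRect
  split_ifs <;> omega

/-- Every diagonal of `μ \ g` is at most as long as one of the two diagonals through the corners
of the removed rectangle: move each of its boxes right along its row or down its column onto the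
nearer of the two. -/
lemma card_diag_le_max (hg : ∀ a b, 1 ≤ a → a ≤ b → b ≤ n → g b ≤ g a) (p : ℕ × ℕ) :
    #((boxesOf n (coRect n i j) \ boxesOf n g).filter fun q => q.1 + p.2 = q.2 + p.1) ≤
      max #((boxesOf n (coRect n i j) \ boxesOf n g).filter fun q => q.1 = q.2 + j)
        #((boxesOf n (coRect n i j) \ boxesOf n g).filter fun q => q.2 = q.1 + i) := by
  simp only [le_max_iff]
  by_cases h1 : p.2 + j ≤ p.1
  · refine Or.inl (card_diag_le_of_rowwise (· - j) fun q hq hd => ?_)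
    rw [mem_boxesOf_coRect_sdiff] at hq
    simp only [mem_filter, mem_boxesOf_coRect_sdiff]
    omega
  by_cases h2 : p.2 + j ≤ p.1 + i
  · refine Or.inl (card_diag_le_of_colwise (· + j) fun q hq hd => ?_)
    rw [mem_boxesOf_coRect_sdiff] at hq
    have := hg q.1 (q.2 + j) (by omega) (by omega) (by omega)
    simp only [mem_filter, mem_boxesOf_coRect_sdiff, and_true]
    omega
  by_cases h3 : p.2 ≤ p.1 + i
  · refine Or.inr (card_diag_le_of_rowwise (· + i) fun q hq hd => ?_)
    rw [mem_boxesOf_coRect_sdiff] at hq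
    simp only [mem_filter, mem_boxesOf_coRect_sdiff, and_true]
    omega
  · refine Or.inr (card_diag_le_of_colwise (· - i) fun q hq hd => ?_)
    rw [mem_boxesOf_coRect_sdiff] at hq
    have := hg q.1 (q.2 - i) (by omega) (by omega) (by omega)
    simp only [mem_filter, mem_boxesOf_coRect_sdiff]
    omega

lemma card_diag_left_eq (hgn : ∀ r, g r ≤ n) :
    #((boxesOf n (coRect n i j) \ boxesOf n g).filter fun q => q.1 = q.2 + j) =
      #((Icc 1 n).filter fun s => s + j ≤ complOf n g s) := by
  refine card_nbij' (fun q => n + 1 - q.1) (fun s => (n + 1 - s, n + 1 - s - j))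
    (fun q hq => ?_) (fun s hs => ?_) (fun q hq => ?_) (fun s hs => ?_)
  all_goals simp only [mem_coe, mem_filter, mem_boxesOf_coRect_sdiff, mem_Icc] at *
  · have := hgn q.1
    simp only [complOf, Nat.sub_sub_self (by omega : q.1 ≤ n + 1)]
    omega
  · have := hgn (n + 1 - s)
    simp only [complOf] at hs
    omega
  · ext <;> simp only <;> omega
  · omega

lemma card_diag_above_eq (hgn : ∀ r, g r ≤ n) :
    #((boxesOf n (coRect n i j) \ boxesOf n g).filter fun q => q.2 = q.1 + i) =
      #((Icc 1 n).filter fun s => s + i ≤ n ∧ s ≤ complOf n g (s + i)) := by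
  refine card_nbij' (fun q => n + 1 - q.2) (fun s => (n + 1 - s - i, n + 1 - s))
    (fun q hq => ?_) (fun s hs => ?_) (fun q hq => ?_) (fun s hs => ?_)
  all_goals simp only [mem_coe, mem_filter, mem_boxesOf_coRect_sdiff, mem_Icc] at *
  · have := hgn q.1
    simp only [complOf, show n + 1 - (n + 1 - q.2 + i) = q.1 by omega]
    omega
  · have := hgn (n + 1 - s - i)
    simp only [complOf, show n + 1 - (s + i) = n + 1 - s - i by omega] at hs
    omega
  · ext <;> simp only <;> omega
  · omega

lemma maxdiag_coRect_sdiff (hg : ∀ a b, 1 ≤ a → a ≤ b → b ≤ n → g b ≤ g a)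
    (hgn : ∀ r, g r ≤ n) :
    maxdiag (boxesOf n (coRect n i j) \ boxesOf n g) =
      #((Icc 1 n).filter fun s =>
        s + j ≤ complOf n g s ∨ (s + i ≤ n ∧ s ≤ complOf n g (s + i))) := by
  have hleft : ∀ a b, 1 ≤ a → a ≤ b → b ≤ n → b + j ≤ complOf n g b → a + j ≤ complOf n g a :=
    fun a b ha hab hbn h => by
      have := complOf_le_complOf hg ha hab hbn
      omega
  have habove : ∀ a b, 1 ≤ a → a ≤ b → b ≤ n → b + i ≤ n ∧ b ≤ complOf n g (b + i) →
      a + i ≤ n ∧ a ≤ complOf n g (a + i) :=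
    fun a b ha hab hbn h => by
      have := complOf_le_complOf hg (by omega : 1 ≤ a + i) (by omega : a + i ≤ b + i) h.1
      omega
  rw [card_filter_Icc_or hleft habove, ← card_diag_left_eq (i := i) hgn,
    ← card_diag_above_eq (j := j) hgn]
  refine le_antisymm (Finset.sup_le fun p _ => card_diag_le_max hg p) (max_le ?_ ?_) <;>
  refine card_le_maxdiag (filter_subset _ _) fun q hq q' hq' => ?_ <;>
  simp only [mem_filter] at hq hq' <;>
  omega

end CoRectangle

lemma maxdiag_coRect_sdiff_hook {n i j a b : ℕ} (ha : 1 ≤ a) (han : a ≤ n) (hbn : b + 1 ≤ n) :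
    maxdiag (boxesOf n (coRect n i j) \ boxesOf n (complOf n (hookFun a b))) =
      if j < a ∨ i ≤ b then 1 else 0 := by
  have hle : ∀ r, hookFun a b r ≤ n := fun r => by
    unfold hookFun
    split_ifs <;> omega
  have hanti : ∀ x y, 1 ≤ x → x ≤ y → y ≤ n → hookFun a b y ≤ hookFun a b x :=
    fun x y hx hxy hyn => by
      unfold hookFun
      split_ifs <;> omega
  rw [maxdiag_coRect_sdiff (fun x y hx hxy hyn => complOf_le_complOf hanti hx hxy hyn)
    fun r => Nat.sub_le _ _]
  have hfilter : ((Icc 1 n).filter fun t => t + j ≤ complOf n (complOf n (hookFun a b)) t ∨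
      (t + i ≤ n ∧ t ≤ complOf n (complOf n (hookFun a b)) (t + i))) =
        ({1} : Finset ℕ).filter fun _ => j < a ∨ i ≤ b := by
    ext t
    simp only [mem_filter, mem_Icc, mem_singleton]
    by_cases ht : 1 ≤ t ∧ t ≤ n
    · rw [complOf_complOf hle (by omega : t ≤ n + 1)]
      by_cases hti : t + i ≤ n
      · rw [complOf_complOf hle (by omega : t + i ≤ n + 1)]
        unfold hookFun
        split_ifs <;> omega
      · unfold hookFun
        split_ifs <;> omega
    · omega
  rw [hfilter, card_filter, sum_singleton]

lemma conjc_le (n : ℕ) (lam : ℕ → ℕ) (s : ℕ) : conjc n lam s ≤ n :=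
  (card_filter_le _ _).trans (by simp)

lemma le_conjc_iff {n : ℕ} {lam : ℕ → ℕ} (hlam : ∀ a b, 1 ≤ a → a ≤ b → b ≤ n → lam b ≤ lam a)
    {s m : ℕ} (hm : 1 ≤ m) : m ≤ conjc n lam s ↔ m ≤ n ∧ s ≤ complOf n lam m :=
  le_card_filter_Icc_iff (fun _ _ ha hab hbn h => h.trans (complOf_le_complOf hlam ha hab hbn)) hm

lemma maxdiag_coRect_sdiff_diagonalHook {n i j : ℕ} {lam : ℕ → ℕ}
    (hlam : ∀ a b, 1 ≤ a → a ≤ b → b ≤ n → lam b ≤ lam a) {s : ℕ}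
    (hs : s ∈ (Icc 1 n).filter fun s => s ≤ complOf n lam s) :
    maxdiag (boxesOf n (coRect n i j) \
        boxesOf n (complOf n (hookFun (complOf n lam s - s + 1) (conjc n lam s - s)))) =
      if s + j ≤ complOf n lam s ∨ (s + i ≤ n ∧ s ≤ complOf n lam (s + i)) then 1 else 0 := by
  rw [mem_filter, mem_Icc] at hs
  have hs_conjc := (le_conjc_iff hlam hs.1.1).2 ⟨hs.1.2, hs.2⟩
  have := conjc_le n lam s
  rw [maxdiag_coRect_sdiff_hook (by omega) (by simp only [complOf]; omega) (by omega)]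
  refine if_congr ?_ rfl rfl
  rw [← le_conjc_iff hlam (by omega : 1 ≤ s + i)]
  omega

theorem stmt_9_general (n : ℕ) (lam : ℕ → ℕ)
    (hmono : ∀ i j : ℕ, 1 ≤ i → i ≤ j → lam j ≤ lam i)
    (hbound : ∀ i : ℕ, lam i ≤ n)
    (i j : ℕ) :
    maxdiag (boxesOf n (fun r => if r ≤ n - i then n else n - j) \ boxesOf n lam) =
      ∑ s ∈ (Finset.Icc 1 n).filter (fun s => s ≤ complOf n lam s),
        maxdiag (boxesOf n (fun r => if r ≤ n - i then n else n - j) \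
          boxesOf n (complOf n
            (hookFun (complOf n lam s - s + 1) (conjc n lam s - s)))) := by
  have hlam : ∀ a b, 1 ≤ a → a ≤ b → b ≤ n → lam b ≤ lam a := fun a b ha hab _ => hmono a b ha hab
  rw [maxdiag_coRect_sdiff hlam hbound,
    sum_congr rfl fun s hs => maxdiag_coRect_sdiff_diagonalHook hlam hs, ← card_filter,
    filter_filter]
  -- every `s` in the union is a diagonal box of `λᶜ`, since `λᶜ` is antitone
  refine congrArg card (filter_congr fun s hs => ?_)
  have := complOf_le_complOf hlam (mem_Icc.1 hs).1 (Nat.le_add_right s i)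
  omega

/-- Let `λ ⊆ n×n` have at least as many boxes above the main diagonal as below, and let
the complement `λ^c` have hook decomposition `ν_1 + ⋯ + ν_k` (one hook per diagonal box
`s ≤ λ^c_s`, with `ν_s = (λ^c_s - s + 1, 1^{(λ^c)'_s - s})`), with `λ_s` the complement
of `ν_s` right-justified in the bottom-right corner. Then for every `μ` that is the
complement of a rectangle in `n×n`, `maxdiag(μ\λ) = Σ_s maxdiag(μ\λ_s)`. -/
theorem stmt_9 (n : ℕ) (lam : ℕ → ℕ)
    (hmono : ∀ i j : ℕ, 1 ≤ i → i ≤ j → lam j ≤ lam i)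
    (hbound : ∀ i : ℕ, lam i ≤ n)
    (hbal : ((Finset.Icc 1 n ×ˢ Finset.Icc 1 n).filter
        (fun p => p.2 ≤ lam p.1 ∧ p.2 < p.1)).card ≤
      ((Finset.Icc 1 n ×ˢ Finset.Icc 1 n).filter
        (fun p => p.2 ≤ lam p.1 ∧ p.1 < p.2)).card)
    (i j : ℕ) (hi : i ≤ n) (hj : j ≤ n) :
    maxdiag (boxesOf n (fun r => if r ≤ n - i then n else n - j) \ boxesOf n lam) =
      ∑ s ∈ (Finset.Icc 1 n).filter (fun s => s ≤ complOf n lam s),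
        maxdiag (boxesOf n (fun r => if r ≤ n - i then n else n - j) \
          boxesOf n (complOf n
            (hookFun (complOf n lam s - s + 1) (conjc n lam s - s)))) :=
  stmt_9_general n lam hmono hbound i j
end
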